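/- arXiv:1308.2261 — 3 statements merged into one kernel-verified Lean document; each statement's English description precedes it below -/
import Mathlib

section
/- Let p be a prime and let f be a formal power series in one variable over ℤ_p whose constant coefficient is 1 and such that every coefficient of f − 1 is divisible by p. Then for every natural number n there exist elements d_0, d_1, …, d_n of ℤ_p with p^j dividing d_j for each 0 ≤ j ≤ n, such that for every natural number k the n-th coefficient of f^k equals ∑_{j=0}^{n} C(k,j)·d_j, where C(k,j) denotes the binomial coefficient (interpreted as 0 when j > k). -/
/-!
Write `f = 1 + g` with `g(0) = 0` and `p ∣ g`. By the binomial theorem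
`f^k = ∑_j C(k,j) g^j`, and since `X^j ∣ g^j` only the terms with `j ≤ n` reach the coefficient of
`X^n`; so `d_j` is the `n`-th coefficient of `g^j`, which is divisible by `p^j` because `p^j ∣ g^j`.
-/

namespace PowerSeries

variable {R : Type*}

theorem coeff_pow_eq_zero_of_lt [CommSemiring R] {g : R⟦X⟧} (hg : constantCoeff g = 0)
    {n j : ℕ} (hnj : n < j) : coeff n (g ^ j) = 0 :=
  coeff_of_lt_order n <| (Nat.cast_lt.2 hnj).trans_le (le_order_pow_of_constantCoeff_eq_zero j hg)

theorem coeff_one_add_pow [CommSemiring R] {g : R⟦X⟧} (hg : constantCoeff g = 0) (n k : ℕ) :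
    coeff n ((1 + g) ^ k) = ∑ j ∈ Finset.range (n + 1), (k.choose j : R) * coeff n (g ^ j) := by
  have hexpand : coeff n ((1 + g) ^ k) =
      ∑ j ∈ Finset.range (k + 1), (k.choose j : R) * coeff n (g ^ j) := by
    rw [add_comm, add_pow, map_sum]
    refine Finset.sum_congr rfl fun j _ => ?_
    rw [one_pow, mul_one, ← map_natCast (C (R := R)), mul_comm, coeff_C_mul]
  have hvanish : ∀ j, n < j ∨ k < j → (k.choose j : R) * coeff n (g ^ j) = 0 := by
    rintro j (hnj | hkj)
    · rw [coeff_pow_eq_zero_of_lt hg hnj, mul_zero]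
    · rw [Nat.choose_eq_zero_of_lt hkj, Nat.cast_zero, zero_mul]
  rw [hexpand,
    ← Finset.sum_subset (Finset.range_subset_range.2 (Nat.succ_le_succ (min_le_right n k))),
    ← Finset.sum_subset (Finset.range_subset_range.2 (Nat.succ_le_succ (min_le_left n k)))] <;>
  · intro j _ hj
    exact hvanish j (by simp only [Finset.mem_range] at hj; omega)

theorem pow_dvd_coeff_pow [CommSemiring R] {g : R⟦X⟧} {a : R} (ha : ∀ m, a ∣ coeff m g)
    (n j : ℕ) : a ^ j ∣ coeff n (g ^ j) := by
  choose h hh using ha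
  have hg : g = a • mk h := by ext m; simp [hh m]
  rw [hg, smul_pow, coeff_smul, smul_eq_mul]
  exact dvd_mul_right _ _

end PowerSeries

/-- if `f ∈ ℤ_p[[X]]` has constant coefficient `1` and `f ≡ 1 mod p`,
then for every `n` there are `d_0, …, d_n ∈ ℤ_p` with `p^j ∣ d_j` such that for all `k`,
the `n`-th coefficient of `f^k` equals `∑_{j=0}^n C(k,j) · d_j`. -/
theorem stmt0 (p : ℕ) [Fact p.Prime] (f : PowerSeries ℤ_[p])
    (hconst : PowerSeries.constantCoeff f = 1)
    (hcong : ∀ n : ℕ, (p : ℤ_[p]) ∣ PowerSeries.coeff n (f - 1)) :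
    ∀ n : ℕ, ∃ d : ℕ → ℤ_[p],
      (∀ j : ℕ, j ≤ n → (p : ℤ_[p]) ^ j ∣ d j) ∧
      (∀ k : ℕ, PowerSeries.coeff n (f ^ k) =
        ∑ j ∈ Finset.range (n + 1), (Nat.choose k j : ℤ_[p]) * d j) := by
  intro n
  have hg : PowerSeries.constantCoeff (f - 1) = 0 := by
    rw [map_sub, hconst, map_one, sub_self]
  refine ⟨fun j => PowerSeries.coeff n ((f - 1) ^ j),
    fun j _ => PowerSeries.pow_dvd_coeff_pow hcong n j, fun k => ?_⟩
  rw [← PowerSeries.coeff_one_add_pow hg, add_sub_cancel]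
end

section
/- Let p be a prime, let u be an element of ℤ_p with 2p dividing u − 1, and let F be a formal power series over ℤ_p with coefficients a_0, a_1, a_2, …. For each natural number k, the series ∑_n a_n·(u^k − 1)^n converges in ℤ_p. Then there exists a continuous function L from ℤ_p to ℤ_p such that L(k) = ∑_n a_n·(u^k − 1)^n for every natural number k. -/
/-!
For `u ≡ 1 (mod p)` the lifting-the-exponent bound `‖u ^ n - 1‖ ≤ ‖n‖ · ‖u - 1‖` makes
`k ↦ u ^ k - 1` a 1-Lipschitz map from `ℕ`, with the `p`-adic metric, into the open unit disc.
Evaluation of a power series with coefficients in `ℤ_[p]` is 1-Lipschitz on that disc, so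
`k ↦ F (u ^ k - 1)` is 1-Lipschitz on the dense subset `ℕ` of `ℤ_[p]` and extends continuously
to `ℤ_[p]` by completeness.
-/

theorem exists_continuous_extend_of_denseRange {ι α γ : Type*} [PseudoMetricSpace α]
    [MetricSpace γ] [CompleteSpace γ] {e : ι → α} (he : DenseRange e) {f : ι → γ}
    (hf : ∀ i j, dist (f i) (f j) ≤ dist (e i) (e j)) :
    ∃ L : α → γ, Continuous L ∧ ∀ i, L (e i) = f i := by
  have hf_congr : ∀ i j, e i = e j → f i = f j := fun i j hij =>
    dist_le_zero.mp (by simpa [hij] using hf i j)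
  let g : Set.range e → γ := fun x => f x.2.choose
  have hg : ∀ i, g ⟨e i, i, rfl⟩ = f i := fun i =>
    hf_congr _ _ (show e i ∈ Set.range e from ⟨i, rfl⟩).choose_spec
  have hg_lip : LipschitzWith 1 g := LipschitzWith.of_dist_le_mul fun x y => by
    simpa [g, Subtype.dist_eq, x.2.choose_spec, y.2.choose_spec] using hf x.2.choose y.2.choose
  have hui : IsUniformInducing ((↑) : Set.range e → α) :=
    isUniformEmbedding_subtype_val.isUniformInducing
  have hdense : DenseRange ((↑) : Set.range e → α) := by
    rwa [DenseRange, Subtype.range_coe]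
  refine ⟨(hui.isDenseInducing hdense).extend g,
    (uniformContinuous_uniformly_extend hui hdense hg_lip.uniformContinuous).continuous,
    fun i => ?_⟩
  rw [← hg i]
  exact uniformly_extend_of_ind hui hdense hg_lip.uniformContinuous ⟨e i, i, rfl⟩

namespace PadicInt

variable {p : ℕ} [hp : Fact p.Prime]

theorem norm_pow_sub_pow_le (x y : ℤ_[p]) (n : ℕ) : ‖x ^ n - y ^ n‖ ≤ ‖x - y‖ := by
  obtain ⟨c, hc⟩ := sub_dvd_pow_sub_pow x y n
  rw [hc, norm_mul]
  exact mul_le_of_le_one_right (norm_nonneg _) (norm_le_one c)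

theorem norm_pow_prime_sub_pow_le {x y : ℤ_[p]} (h : (p : ℤ_[p]) ∣ x - y) :
    ‖x ^ p - y ^ p‖ ≤ (p : ℝ)⁻¹ * ‖x - y‖ := by
  obtain ⟨c, hc⟩ := dvd_geom_sum₂_self (x := x) (y := y) (n := p) h
  rw [← geom_sum₂_mul, hc, norm_mul, norm_mul, norm_p]
  exact mul_le_mul_of_nonneg_right (mul_le_of_le_one_right (by positivity) (norm_le_one c))
    (norm_nonneg _)

theorem norm_pow_prime_pow_sub_pow_le {x y : ℤ_[p]} (h : (p : ℤ_[p]) ∣ x - y) (v : ℕ) :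
    ‖x ^ p ^ v - y ^ p ^ v‖ ≤ ‖(p : ℤ_[p]) ^ v‖ * ‖x - y‖ := by
  induction v with
  | zero => simp
  | succ v ih =>
    have hv : (p : ℤ_[p]) ∣ x ^ p ^ v - y ^ p ^ v := h.trans (sub_dvd_pow_sub_pow x y _)
    calc ‖x ^ p ^ (v + 1) - y ^ p ^ (v + 1)‖
        = ‖(x ^ p ^ v) ^ p - (y ^ p ^ v) ^ p‖ := by rw [pow_succ, pow_mul, pow_mul]
      _ ≤ (p : ℝ)⁻¹ * ‖x ^ p ^ v - y ^ p ^ v‖ := norm_pow_prime_sub_pow_le hv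
      _ ≤ (p : ℝ)⁻¹ * (‖(p : ℤ_[p]) ^ v‖ * ‖x - y‖) := by gcongr
      _ = ‖(p : ℤ_[p]) ^ (v + 1)‖ * ‖x - y‖ := by
        rw [pow_succ, norm_mul, norm_p]; ring

theorem norm_pow_sub_pow_le_norm_mul {x y : ℤ_[p]} (h : (p : ℤ_[p]) ∣ x - y) (n : ℕ) :
    ‖x ^ n - y ^ n‖ ≤ ‖(n : ℤ_[p])‖ * ‖x - y‖ := by
  rcases eq_or_ne n 0 with rfl | hn
  · simp
  obtain ⟨v, m, hpm, rfl⟩ := Nat.exists_eq_pow_mul_and_not_dvd hn p hp.out.ne_one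
  have hm : ‖(m : ℤ_[p])‖ = 1 :=
    norm_natCast_eq_one_iff.mpr (hp.out.coprime_iff_not_dvd.mpr hpm)
  calc ‖x ^ (p ^ v * m) - y ^ (p ^ v * m)‖
      = ‖(x ^ p ^ v) ^ m - (y ^ p ^ v) ^ m‖ := by rw [pow_mul, pow_mul]
    _ ≤ ‖x ^ p ^ v - y ^ p ^ v‖ := norm_pow_sub_pow_le _ _ m
    _ ≤ ‖(p : ℤ_[p]) ^ v‖ * ‖x - y‖ := norm_pow_prime_pow_sub_pow_le h v
    _ = ‖((p ^ v * m : ℕ) : ℤ_[p])‖ * ‖x - y‖ := by push_cast; rw [norm_mul, hm, mul_one]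

theorem norm_pow_sub_pow_le_norm_natCast_sub {u : ℤ_[p]} (hu : (p : ℤ_[p]) ∣ u - 1) (k l : ℕ) :
    ‖u ^ k - u ^ l‖ ≤ ‖(k : ℤ_[p]) - l‖ := by
  wlog hlk : l ≤ k generalizing k l
  · rw [norm_sub_rev, norm_sub_rev (k : ℤ_[p])]
    exact this l k (le_of_not_ge hlk)
  obtain ⟨d, rfl⟩ := Nat.exists_eq_add_of_le hlk
  calc ‖u ^ (l + d) - u ^ l‖ = ‖u ^ l‖ * ‖u ^ d - 1 ^ d‖ := by
        rw [one_pow, ← norm_mul, mul_sub, mul_one, pow_add]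
    _ ≤ 1 * (‖(d : ℤ_[p])‖ * 1) := by
        gcongr
        · exact norm_le_one _
        · exact (norm_pow_sub_pow_le_norm_mul hu d).trans
            (mul_le_mul_of_nonneg_left (norm_le_one _) (norm_nonneg _))
    _ = ‖((l + d : ℕ) : ℤ_[p]) - l‖ := by push_cast; rw [add_sub_cancel_left]; ring

theorem summable_coeff_mul_pow (F : PowerSeries ℤ_[p]) {x : ℤ_[p]} (hx : ‖x‖ < 1) :
    Summable fun n => PowerSeries.coeff n F * x ^ n := by
  apply NonarchimedeanAddGroup.summable_of_tendsto_cofinite_zero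
  rw [Nat.cofinite_eq_atTop, tendsto_zero_iff_norm_tendsto_zero]
  refine squeeze_zero (fun n => norm_nonneg _) (fun n => ?_)
    (tendsto_pow_atTop_nhds_zero_of_lt_one (norm_nonneg _) hx)
  rw [norm_mul, norm_pow]
  exact mul_le_of_le_one_left (by positivity) (norm_le_one _)

theorem norm_tsum_coeff_mul_pow_sub_le (F : PowerSeries ℤ_[p]) {x y : ℤ_[p]} (hx : ‖x‖ < 1)
    (hy : ‖y‖ < 1) :
    ‖∑' n, PowerSeries.coeff n F * x ^ n - ∑' n, PowerSeries.coeff n F * y ^ n‖ ≤ ‖x - y‖ := by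
  rw [← (summable_coeff_mul_pow F hx).tsum_sub (summable_coeff_mul_pow F hy)]
  refine IsUltrametricDist.norm_tsum_le_of_forall_le_of_nonneg (norm_nonneg _) fun n => ?_
  rw [← mul_sub, norm_mul]
  exact (mul_le_of_le_one_left (norm_nonneg _) (norm_le_one _)).trans (norm_pow_sub_pow_le x y n)

end PadicInt

/-- for `u ∈ ℤ_p` with `2p ∣ u − 1` and `F ∈ ℤ_p[[T]]` with coefficients
`a_n`, there is a continuous `L : ℤ_p → ℤ_p` with `L k = ∑_n a_n (u^k − 1)^n`
(in particular each of these series converges) for every natural number `k`. -/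
theorem stmt9 (p : ℕ) [Fact p.Prime] (u : ℤ_[p]) (hu : (2 * p : ℤ_[p]) ∣ u - 1)
    (F : PowerSeries ℤ_[p]) :
    ∃ L : ℤ_[p] → ℤ_[p], Continuous L ∧
      ∀ k : ℕ, HasSum (fun n : ℕ => PowerSeries.coeff n F * (u ^ k - 1) ^ n)
        (L (k : ℤ_[p])) := by
  have hpu : (p : ℤ_[p]) ∣ u - 1 := (dvd_mul_left _ _).trans hu
  have hsmall (k : ℕ) : ‖u ^ k - 1‖ < 1 := by
    simpa using (PadicInt.norm_pow_sub_pow_le u 1 k).trans_lt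
      ((PadicInt.norm_lt_one_iff_dvd _).mpr hpu)
  obtain ⟨L, hL, hLk⟩ := exists_continuous_extend_of_denseRange PadicInt.denseRange_natCast
    (f := fun k : ℕ => ∑' n, PowerSeries.coeff n F * (u ^ k - 1) ^ n) fun k l => by
      rw [dist_eq_norm, dist_eq_norm]
      refine (PadicInt.norm_tsum_coeff_mul_pow_sub_le F (hsmall k) (hsmall l)).trans ?_
      simpa using PadicInt.norm_pow_sub_pow_le_norm_natCast_sub hpu k l
  exact ⟨L, hL, fun k => hLk k ▸ (PadicInt.summable_coeff_mul_pow F (hsmall k)).hasSum⟩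
end

section
/- Let E be a field of characteristic different from 2, let G be a group, let χ : G → Eˣ be a group homomorphism, and let c ∈ G satisfy χ(c) = −1. Suppose κ : G → E satisfies the cocycle relation κ(στ) = κ(σ) + χ(σ)^{-1}·κ(τ) for all σ, τ ∈ G, and κ(c) = 0. If κ is a coboundary, i.e. there exists x ∈ E with κ(σ) = (χ(σ)^{-1} − 1)·x for all σ ∈ G, then κ is identically zero. -/
theorem eq_zero_of_eq_sub_one_mul {G E : Type*} [DivisionRing E] {u κ : G → E} {x : E}
    (hκ : ∀ σ, κ σ = (u σ - 1) * x) {c : G} (hc : u c ≠ 1) (hκc : κ c = 0) (σ : G) :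
    κ σ = 0 := by
  have hx : x = 0 :=
    (mul_eq_zero.mp ((hκ c).symm.trans hκc)).resolve_left (sub_ne_zero.mpr hc)
  rw [hκ σ, hx, mul_zero]

theorem stmt12_general (E : Type*) [Field E] (h2 : (2 : E) ≠ 0) (G : Type*) [Group G]
    (χ : G →* Eˣ) (c : G) (hc : (χ c : E) = -1) (κ : G → E)
    (hκc : κ c = 0)
    (hcobound : ∃ x : E, ∀ σ : G, κ σ = ((χ σ : E)⁻¹ - 1) * x) :
    ∀ σ : G, κ σ = 0 := by
  obtain ⟨x, hx⟩ := hcobound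
  have hχc : (χ c : E)⁻¹ ≠ 1 := by
    rw [hc, inv_neg, inv_one]
    exact fun h ↦ h2 (by linear_combination -h)
  exact eq_zero_of_eq_sub_one_mul hx hχc hκc

/-- a 1-cocycle `κ : G → E(χ⁻¹)` vanishing at a complex conjugation `c`
(with `χ c = −1`) which is a coboundary must be identically zero. -/
theorem stmt12 (E : Type*) [Field E] (h2 : (2 : E) ≠ 0) (G : Type*) [Group G]
    (χ : G →* Eˣ) (c : G) (hc : (χ c : E) = -1) (κ : G → E)
    (hcocycle : ∀ σ τ : G, κ (σ * τ) = κ σ + (χ σ : E)⁻¹ * κ τ)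
    (hκc : κ c = 0)
    (hcobound : ∃ x : E, ∀ σ : G, κ σ = ((χ σ : E)⁻¹ - 1) * x) :
    ∀ σ : G, κ σ = 0 :=
  stmt12_general E h2 G χ c hc κ hκc hcobound
end
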